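/- arXiv:1804.09468 — 7 statements merged into one kernel-verified Lean document; each statement's English description precedes it below -/
import Mathlib

section
/- Let N be a finite set of agents with values v_i ≥ 0 and normalized risk-averse utilities u_i (satisfying monotonicity, u_i(v_i) = 0, u_i(0) = v_i, u_i(p) ≥ v_i - p for 0 ≤ p ≤ v_i, u_i(p) ≤ v_i - p for p > v_i). Then for any payments p_i ≥ 0, the social welfare Σ_i u_i(p_i) + Σ_i p_i is at most 2 Σ_i v_i. Consequently the optimal risk-averse social welfare is at most twice the optimal quasilinear social welfare. -/
/-- Lemma 1: with normalized risk-averse utilities, social welfare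
(sum of utilities plus payments) is at most twice the sum of values;
hence the optimal risk-averse welfare is at most twice the optimal
quasilinear welfare. -/
theorem stmt1 {N : Type*} [Fintype N] (v : N → ℝ) (u : N → ℝ → ℝ) (p : N → ℝ)
    (hv : ∀ i, 0 ≤ v i) (hp : ∀ i, 0 ≤ p i)
    (hmono : ∀ i, ∀ q q' : ℝ, q ≤ q' → u i q' ≤ u i q)
    (hnorm_v : ∀ i, u i (v i) = 0) (hnorm_0 : ∀ i, u i 0 = v i)
    (hconc₁ : ∀ i, ∀ q : ℝ, 0 ≤ q → q ≤ v i → v i - q ≤ u i q)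
    (hconc₂ : ∀ i, ∀ q : ℝ, v i < q → u i q ≤ v i - q) :
    (∑ i, u i (p i)) + (∑ i, p i) ≤ 2 * ∑ i, v i := by
  rw [← Finset.sum_add_distrib, Finset.mul_sum]
  apply Finset.sum_le_sum
  intro i _
  rcases le_or_gt (p i) (v i) with h | h
  · have h1 : u i (p i) ≤ v i := by
      have := hmono i 0 (p i) (hp i); linarith [hnorm_0 i]
    linarith
  · have := hconc₂ i (p i) h
    linarith [hv i]
end

section
/- Suppose for all i and all action profiles a we have the smoothness inequality Σ_i u_i(a*_i, a_{-i}) ≥ λ·OPT − μ·Σ_i p_i(a), where each u_i(a) ≥ 0 in expectation at the equilibrium, payments are nonnegative, and a is a (mixed) Nash/correlated equilibrium so that E[u_i(a)] ≥ E[u_i(a*_i, a_{-i})] for all i. Then E[Σ_i u_i(a) + Σ_i p_i(a)] ≥ (λ / max{1, μ}) · OPT. -/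
/-- Theorem 1 (full information): smoothness with general utilities implies the
price-of-anarchy bound `λ / max{1, μ}` for (mixed Nash / correlated) equilibria.
Here `w` is the equilibrium distribution over action profiles `A`, `u i a` is
player `i`'s utility, `p i a` her payment, and `dev i a` her utility
`u_i(a*_i, a_{-i})` from the smoothness deviation at profile `a`. -/
theorem stmt2 {A N : Type*} [Fintype A] [Fintype N]
    (w : A → ℝ) (hw0 : ∀ a, 0 ≤ w a) (hw1 : ∑ a, w a = 1)
    (u p dev : N → A → ℝ) (lam mu OPT : ℝ)
    (hlam : 0 ≤ lam) (hmu : 0 ≤ mu) (hOPT : 0 ≤ OPT)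
    (hp : ∀ i a, 0 ≤ p i a)
    (hsmooth : ∀ a, lam * OPT - mu * (∑ i, p i a) ≤ ∑ i, dev i a)
    (hIR : ∀ i, 0 ≤ ∑ a, w a * u i a)
    (heq : ∀ i, (∑ a, w a * dev i a) ≤ ∑ a, w a * u i a) :
    (lam / max 1 mu) * OPT ≤ ∑ a, w a * ((∑ i, u i a) + ∑ i, p i a) := by
  set U := ∑ a, w a * ∑ i, u i a with hU
  set P := ∑ a, w a * ∑ i, p i a with hP
  have hRHS : ∑ a, w a * ((∑ i, u i a) + ∑ i, p i a) = U + P := by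
    simp [hU, hP, mul_add, Finset.sum_add_distrib]
  have hU0 : 0 ≤ U := by
    have : U = ∑ i, ∑ a, w a * u i a := by
      rw [hU, Finset.sum_comm]
      simp [Finset.mul_sum]
    rw [this]
    exact Finset.sum_nonneg fun i _ => hIR i
  have hP0 : 0 ≤ P := by
    refine Finset.sum_nonneg fun a _ => mul_nonneg (hw0 a) ?_
    exact Finset.sum_nonneg fun i _ => hp i a
  have hkey : lam * OPT - mu * P ≤ U := by
    have h1 : ∑ a, w a * (lam * OPT - mu * ∑ i, p i a) ≤ ∑ a, w a * ∑ i, dev i a :=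
      Finset.sum_le_sum fun a _ => mul_le_mul_of_nonneg_left (hsmooth a) (hw0 a)
    have h2 : ∑ a, w a * ∑ i, dev i a ≤ U := by
      have hd : ∑ a, w a * ∑ i, dev i a = ∑ i, ∑ a, w a * dev i a := by
        rw [Finset.sum_comm]
        simp [Finset.mul_sum]
      have hu : U = ∑ i, ∑ a, w a * u i a := by
        rw [hU, Finset.sum_comm]
        simp [Finset.mul_sum]
      rw [hd, hu]
      exact Finset.sum_le_sum fun i _ => heq i
    have h3 : ∑ a, w a * (lam * OPT - mu * ∑ i, p i a) = lam * OPT - mu * P := by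
      simp only [mul_sub, Finset.sum_sub_distrib]
      rw [show (∑ x : A, w x * (lam * OPT)) = lam * OPT from by
        rw [← Finset.sum_mul, hw1, one_mul]]
      congr 1
      rw [hP, Finset.mul_sum]
      exact Finset.sum_congr rfl fun a _ => by ring
    rw [h3] at h1
    exact h1.trans h2
  rw [hRHS]
  rcases le_total mu 1 with h | h
  · rw [max_eq_left h]
    have : mu * P ≤ P := by nlinarith
    nlinarith
  · rw [max_eq_right h]
    rw [div_mul_eq_mul_div, div_le_iff₀ (by linarith)]
    nlinarith
end

section
/- Suppose a mechanism is (λ, μ)-smooth with respect to quasilinear utilities: for every action profile a there exist deviations a*_i with Σ_i (v_i(X(a*_i,a_{-i})) − p_i(a*_i,a_{-i})) ≥ λ·ÔPT − μ·Σ_i p_i(a), and each deviation guarantees nonnegative quasilinear utility: v_i(X(a*_i,a_{-i})) − p_i(a*_i,a_{-i}) ≥ 0 for all a_{-i}. If u_i are normalized risk-averse utilities (in particular u_i(x,p) ≥ v_i(x) − p whenever 0 ≤ p ≤ v_i(x)) and OPT ≤ 2·ÔPT, then the mechanism is (λ/2, μ)-smooth with respect to the risk-averse utilities: Σ_i u_i(a*_i,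 a_{-i}) ≥ (λ/2)·OPT − μ·Σ_i p_i(a). -/
/-- Lemma 2: if a mechanism is (λ, μ)-smooth w.r.t. quasilinear utilities and the
smoothness deviations guarantee nonnegative quasilinear utility, then it is
(λ/2, μ)-smooth w.r.t. normalized risk-averse utilities.  For each action profile
`a : A`, `vdev i a`, `pdev i a` and `udev i a` denote player `i`'s value, payment
and risk-averse utility under her smoothness deviation `(a*_i, a_{-i})`, and
`p i a` the payment under `a`. -/
theorem stmt3 {N : Type*} [Fintype N] {A : Type*}
    (p vdev pdev udev : N → A → ℝ)
    (lam mu OPThat OPT : ℝ) (hlam : 0 ≤ lam)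
    (hsmoothQL : ∀ a, lam * OPThat - mu * (∑ i, p i a) ≤ ∑ i, (vdev i a - pdev i a))
    (hnn : ∀ i a, 0 ≤ vdev i a - pdev i a)
    (hpdev : ∀ i a, 0 ≤ pdev i a)
    (hRA : ∀ i a, 0 ≤ pdev i a → pdev i a ≤ vdev i a →
      vdev i a - pdev i a ≤ udev i a)
    (hOPT : OPT ≤ 2 * OPThat) :
    ∀ a, (lam / 2) * OPT - mu * (∑ i, p i a) ≤ ∑ i, udev i a := by
  intro a
  have h1 : (lam / 2) * OPT ≤ lam * OPThat := by
    have := mul_le_mul_of_nonneg_left hOPT (by linarith : (0:ℝ) ≤ lam / 2)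
    linarith
  have h2 : ∑ i, (vdev i a - pdev i a) ≤ ∑ i, udev i a :=
    Finset.sum_le_sum fun i _ =>
      hRA i a (hpdev i a) (by have := hnn i a; linarith)
  have := hsmoothQL a
  linarith
end

section
/- Suppose a mechanism is (λ, μ)-smooth w.r.t. quasilinear utilities with deviations satisfying the relaxed guarantee u_i(a*_i, a_{-i}) ≥ C·(v_i(X(a*_i,a_{-i})) − p_i(a*_i,a_{-i})) with quasilinear deviation utility nonnegative, where 0 < C < 1 is constant, and OPT ≤ 2·ÔPT. Then the mechanism is (C·λ/2, C·μ)-smooth with respect to the relaxed normalized risk-averse utilities. -/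
/-- Relaxed-normalization version of Lemma 2: if deviations guarantee nonnegative
quasilinear utility and the risk-averse utilities only satisfy the relaxed bound
`u ≥ C·(v − p)` (for a constant `0 < C < 1`), then a (λ, μ)-smooth mechanism is
(C·λ/2, C·μ)-smooth w.r.t. the relaxed normalized risk-averse utilities. -/
theorem stmt4 {N : Type*} [Fintype N] {A : Type*}
    (p vdev pdev udev : N → A → ℝ)
    (lam mu OPThat OPT C : ℝ) (hlam : 0 ≤ lam)
    (hC0 : 0 < C) (hC1 : C < 1)
    (hsmoothQL : ∀ a, lam * OPThat - mu * (∑ i, p i a) ≤ ∑ i, (vdev i a - pdev i a))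
    (hnn : ∀ i a, 0 ≤ vdev i a - pdev i a)
    (hpdev : ∀ i a, 0 ≤ pdev i a)
    (hRA : ∀ i a, 0 ≤ pdev i a → pdev i a ≤ vdev i a →
      C * (vdev i a - pdev i a) ≤ udev i a)
    (hOPT : OPT ≤ 2 * OPThat) :
    ∀ a, (C * lam / 2) * OPT - (C * mu) * (∑ i, p i a) ≤ ∑ i, udev i a := by
  intro a
  have h1 : ∑ i, C * (vdev i a - pdev i a) ≤ ∑ i, udev i a := by
    apply Finset.sum_le_sum
    intro i _
    exact hRA i a (hpdev i a) (by linarith [hnn i a])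
  have h2 : C * (lam * OPThat - mu * (∑ i, p i a)) ≤ ∑ i, C * (vdev i a - pdev i a) := by
    rw [← Finset.mul_sum]
    exact mul_le_mul_of_nonneg_left (hsmoothQL a) hC0.le
  have h3 : (C * lam / 2) * OPT ≤ C * (lam * OPThat) := by
    have : (C * lam / 2) * OPT ≤ (C * lam / 2) * (2 * OPThat) :=
      mul_le_mul_of_nonneg_left hOPT (by positivity)
    linarith
  nlinarith [h1, h2, h3]
end

section
/- Let a be a correlated equilibrium of a weakly (λ, μ₁, μ₂)-smooth mechanism with general nonnegative-expected utilities, satisfying the no-overbidding condition E[W_i(a_i, X(a))] ≤ E[u_i(a) + p_i(a)] for all i. Then the expected social welfare E[Σ_i u_i(a) + Σ_i p_i(a)] is at least (λ / (μ₂ + max{μ₁, 1})) · OPT. -/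
/-- Theorem 8 (weak smoothness, full information): a correlated equilibrium `w`
of a weakly (λ, μ₁, μ₂)-smooth mechanism satisfying the no-overbidding
condition `E[W_i] ≤ E[u_i + p_i]` has expected welfare at least
`λ / (μ₂ + max{μ₁, 1})` times `OPT`.  Here `W i a` denotes player `i`'s
willingness-to-pay `W_i(a_i, X(a))` and `dev i a` her utility from the
smoothness deviation `u_i(a*_i, a_{-i})`. -/
theorem stmt5 {A N : Type*} [Fintype A] [Fintype N]
    (w : A → ℝ) (hw0 : ∀ a, 0 ≤ w a) (hw1 : ∑ a, w a = 1)
    (u p dev W : N → A → ℝ) (lam mu1 mu2 OPT : ℝ)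
    (hlam : 0 ≤ lam) (hmu1 : 0 ≤ mu1) (hmu2 : 0 ≤ mu2) (hOPT : 0 ≤ OPT)
    (hp : ∀ i a, 0 ≤ p i a)
    (hsmooth : ∀ a,
      lam * OPT - mu1 * (∑ i, p i a) - mu2 * (∑ i, W i a) ≤ ∑ i, dev i a)
    (hIR : ∀ i, 0 ≤ ∑ a, w a * u i a)
    (heq : ∀ i, (∑ a, w a * dev i a) ≤ ∑ a, w a * u i a)
    (hnob : ∀ i, (∑ a, w a * W i a) ≤ ∑ a, w a * (u i a + p i a)) :
    (lam / (mu2 + max mu1 1)) * OPT ≤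
      ∑ a, w a * ((∑ i, u i a) + ∑ i, p i a) := by

  classical
  set Utot := ∑ a, w a * ∑ i, u i a with hU
  set Ptot := ∑ a, w a * ∑ i, p i a with hP
  set Wtot := ∑ a, w a * ∑ i, W i a with hW
  set Dtot := ∑ a, w a * ∑ i, dev i a with hD
  have fub : ∀ f : N → A → ℝ, ∑ a, w a * ∑ i, f i a = ∑ i, ∑ a, w a * f i a := by
    intro f
    rw [Finset.sum_comm]
    simp [Finset.mul_sum]
  have hUnn : 0 ≤ Utot := by
    rw [hU, fub]
    exact Finset.sum_nonneg fun i _ => hIR i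
  have hPnn : 0 ≤ Ptot := by
    refine Finset.sum_nonneg fun a _ => mul_nonneg (hw0 a) ?_
    exact Finset.sum_nonneg fun i _ => hp i a
  have hDU : Dtot ≤ Utot := by
    rw [hD, hU, fub, fub]
    exact Finset.sum_le_sum fun i _ => heq i
  have hWUP : Wtot ≤ Utot + Ptot := by
    rw [hW, hU, hP, fub, fub, fub, ← Finset.sum_add_distrib]
    refine Finset.sum_le_sum fun i _ => ?_
    calc ∑ a, w a * W i a ≤ ∑ a, w a * (u i a + p i a) := hnob i
      _ = ∑ a, w a * u i a + ∑ a, w a * p i a := by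
          simp [mul_add, Finset.sum_add_distrib]
  have key : lam * OPT ≤ Dtot + mu1 * Ptot + mu2 * Wtot := by
    have h1 : ∑ a, w a * (lam * OPT) ≤
        ∑ a, w a * (∑ i, dev i a + mu1 * ∑ i, p i a + mu2 * ∑ i, W i a) := by
      refine Finset.sum_le_sum fun a _ => mul_le_mul_of_nonneg_left ?_ (hw0 a)
      linarith [hsmooth a]
    have h2 : ∑ a, w a * (lam * OPT) = lam * OPT := by
      rw [← Finset.sum_mul, hw1, one_mul]
    have h3 : ∑ a, w a * (∑ i, dev i a + mu1 * ∑ i, p i a + mu2 * ∑ i, W i a)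
        = Dtot + mu1 * Ptot + mu2 * Wtot := by
      rw [hD, hP, hW, Finset.mul_sum, Finset.mul_sum]
      rw [← Finset.sum_add_distrib, ← Finset.sum_add_distrib]
      refine Finset.sum_congr rfl fun a _ => ?_
      ring
    rw [h2, h3] at h1
    exact h1
  have hm1 : (1:ℝ) ≤ max mu1 1 := le_max_right _ _
  have hm2 : mu1 ≤ max mu1 1 := le_max_left _ _
  have hmpos : (0:ℝ) < mu2 + max mu1 1 := by linarith
  have hS : ∑ a, w a * ((∑ i, u i a) + ∑ i, p i a) = Utot + Ptot := by
    rw [hU, hP, ← Finset.sum_add_distrib]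
    exact Finset.sum_congr rfl fun a _ => by ring
  rw [hS, div_mul_eq_mul_div, div_le_iff₀ hmpos]
  nlinarith [mul_nonneg (sub_nonneg.2 hm1) hUnn, mul_nonneg (sub_nonneg.2 hm2) hPnn]
end

section
/- Let F be the CDF on [1/2, M] with density f(t) = 2(1 − (M−1)ε) on [1/2, 1) and f(t) = ε on [1, M], where ε = 1/M² and M > 5. Define β(x) = ∫_{1/2}^x f(t)(e^t − 1)/(F(t) + (1 − F(t))e^t) dt. Then β(M − 1) > (1/3)·ln(M/2). -/
open intervalIntegral Real MeasureTheory Set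

/-!
Since `F ≤ 1`, the denominator `F + (1 - F) eᵗ = 1 + (1 - F)(eᵗ - 1)` is at least `1`, so the
integrand of `β` is nonnegative and `β (M - 1)` is at least its integral over `[M/2, M - 1]`.
There `F t = 1 - ε (M - t)`, so the integrand is `ε u / (1 + ε (M - t) u)` with `u = eᵗ - 1`;
as `(M - t) u ≥ M² = 1 / ε` on this interval, it is at least `1 / (2 (M - t))`, whose integral
is `log (M / 2) / 2`.
-/

lemma four_mul_add_one_le_exp {x : ℝ} (hx : 5 / 2 ≤ x) : 4 * x + 1 ≤ exp x := by
  have h := sum_le_exp_of_nonneg (by linarith : (0 : ℝ) ≤ x) 6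
  simp only [Finset.sum_range_succ, Finset.sum_range_zero, Nat.factorial] at h
  norm_num at h
  nlinarith [sq_nonneg x, mul_nonneg (sq_nonneg x) (by linarith : (0 : ℝ) ≤ x - 5 / 2)]

lemma one_le_add_one_sub_mul_exp {F t : ℝ} (hF : F ≤ 1) (ht : 0 ≤ t) :
    1 ≤ F + (1 - F) * exp t := by
  nlinarith [one_le_exp ht]

lemma half_inv_le_div_one_add_mul {ε s u : ℝ} (hs : 0 < s) (h : 1 ≤ ε * s * u) :
    s⁻¹ / 2 ≤ ε * u / (1 + ε * s * u) := by
  rw [inv_div_left, ← one_div, div_le_div_iff₀ (by positivity) (by linarith)]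
  linarith

section StepFunction

variable {a b s lo x : ℝ}

lemma intervalIntegrable_ite_lt :
    IntervalIntegrable (fun t => if t < s then a else b) volume lo x := by
  rcases le_total a b with hab | hab
  · refine Monotone.intervalIntegrable fun t u htu => ?_
    split_ifs <;> first | rfl | exact hab | linarith
  · refine Antitone.intervalIntegrable fun t u htu => ?_
    split_ifs <;> first | rfl | exact hab | linarith

lemma integral_ite_lt_of_le_of_le (hlo : lo ≤ x) (hx : x ≤ s) :
    ∫ t in lo..x, (if t < s then a else b) = a * (x - lo) := by
  rw [integral_congr_Ioo_of_le hlo (g := fun _ => a) fun t ht => if_pos (ht.2.trans_le hx),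
    intervalIntegral.integral_const, smul_eq_mul, mul_comm]

lemma integral_ite_lt_of_le (hlo : lo ≤ s) (hs : s ≤ x) :
    ∫ t in lo..x, (if t < s then a else b) = a * (s - lo) + b * (x - s) := by
  rw [← integral_add_adjacent_intervals intervalIntegrable_ite_lt
      intervalIntegrable_ite_lt, integral_ite_lt_of_le_of_le hlo le_rfl,
    integral_congr (g := fun _ => b) fun t ht => if_neg (not_lt.2 (uIcc_of_le hs ▸ ht).1),
    intervalIntegral.integral_const, smul_eq_mul, mul_comm b]

end StepFunction

lemma integral_inv_sub_left {a b c : ℝ} (ha : a < c) (hb : b < c) :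
    ∫ x in a..b, (c - x)⁻¹ = log ((c - a) / (c - b)) := by
  rw [integral_comp_sub_left (fun x => x⁻¹), integral_inv_of_pos (by linarith) (by linarith)]

lemma sq_le_sub_mul_exp_sub_one {M t : ℝ} (hM : 5 ≤ M) (ht : M / 2 ≤ t) (htM : t ≤ M - 1) :
    M ^ 2 ≤ (M - t) * (exp t - 1) := by
  have hexp_half : 2 * M + 1 ≤ exp (M / 2) := by
    have := four_mul_add_one_le_exp (x := M / 2) (by linarith)
    linarith
  have hexp_t : exp (M / 2) * (t - M / 2 + 1) ≤ exp t := by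
    rw [show exp t = exp (M / 2) * exp (t - M / 2) by rw [← exp_add]; ring_nf]
    gcongr
    linarith [add_one_le_exp (t - M / 2)]
  have hquad : M / 2 ≤ (M - t) * (t - M / 2 + 1) := by nlinarith
  have hpos : 0 ≤ M - t := by linarith
  nlinarith [mul_le_mul_of_nonneg_left hexp_t hpos, exp_pos (M / 2)]

lemma sub_one_mul_one_div_sq_le_one {M : ℝ} (hM : 1 ≤ M) : (M - 1) * (1 / M ^ 2) ≤ 1 := by
  rw [mul_one_div, div_le_one (by positivity)]
  nlinarith

namespace AllPay

noncomputable section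

def density (M ε t : ℝ) : ℝ := if t < 1 then 2 * (1 - (M - 1) * ε) else ε

def cdf (M ε x : ℝ) : ℝ := ∫ t in (1 / 2 : ℝ)..x, density M ε t

def bidIntegrand (M ε t : ℝ) : ℝ :=
  density M ε t * (exp t - 1) / (cdf M ε t + (1 - cdf M ε t) * exp t)

end

variable {M ε a b t x : ℝ}

lemma cdf_of_le_one (hx : 1 / 2 ≤ x) (hx1 : x ≤ 1) :
    cdf M ε x = 2 * (1 - (M - 1) * ε) * (x - 1 / 2) :=
  integral_ite_lt_of_le_of_le hx hx1

lemma cdf_of_one_le (hx : 1 ≤ x) : cdf M ε x = 1 - ε * (M - x) := by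
  unfold cdf density
  rw [integral_ite_lt_of_le (by norm_num) hx]
  ring

lemma continuous_cdf : Continuous (cdf M ε) :=
  continuous_primitive (fun _ _ => intervalIntegrable_ite_lt) _

lemma density_nonneg (hε : 0 ≤ ε) (hMε : (M - 1) * ε ≤ 1) : 0 ≤ density M ε t := by
  unfold density
  split_ifs <;> nlinarith

lemma cdf_le_one (hε : 0 ≤ ε) (hM : 1 ≤ M) (hMε : (M - 1) * ε ≤ 1)
    (hx : 1 / 2 ≤ x) (hxM : x ≤ M) : cdf M ε x ≤ 1 := by
  rcases le_total x 1 with hx1 | hx1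
  · rw [cdf_of_le_one hx hx1]
    nlinarith
  · rw [cdf_of_one_le hx1]
    nlinarith

lemma one_le_cdf_add_mul_exp (hε : 0 ≤ ε) (hM : 1 ≤ M) (hMε : (M - 1) * ε ≤ 1)
    (ht : 1 / 2 ≤ t) (htM : t ≤ M) :
    1 ≤ cdf M ε t + (1 - cdf M ε t) * exp t :=
  one_le_add_one_sub_mul_exp (cdf_le_one hε hM hMε ht htM) (by linarith)

lemma bidIntegrand_nonneg (hε : 0 ≤ ε) (hM : 1 ≤ M) (hMε : (M - 1) * ε ≤ 1)
    (ht : 1 / 2 ≤ t) (htM : t ≤ M) : 0 ≤ bidIntegrand M ε t :=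
  div_nonneg (mul_nonneg (density_nonneg hε hMε) (sub_nonneg.2 (one_le_exp (by linarith))))
    (by linarith [one_le_cdf_add_mul_exp hε hM hMε ht htM])

lemma intervalIntegrable_bidIntegrand (hε : 0 ≤ ε) (hM : 1 ≤ M) (hMε : (M - 1) * ε ≤ 1)
    (ha : 1 / 2 ≤ a) (hab : a ≤ b) (hb : b ≤ M) :
    IntervalIntegrable (bidIntegrand M ε) volume a b := by
  have hk : ContinuousOn (fun t => (exp t - 1) / (cdf M ε t + (1 - cdf M ε t) * exp t))
      (uIcc a b) := by
    have := continuous_cdf (M := M) (ε := ε)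
    refine ContinuousOn.div (by fun_prop) (by fun_prop) fun t ht => ?_
    rw [uIcc_of_le hab] at ht
    linarith [one_le_cdf_add_mul_exp hε hM hMε (ha.trans ht.1) (ht.2.trans hb)]
  unfold bidIntegrand density
  simpa only [mul_div_assoc] using
    (intervalIntegrable_ite_lt).mul_continuousOn hk

lemma integral_bidIntegrand_nonneg (hε : 0 ≤ ε) (hM : 1 ≤ M) (hMε : (M - 1) * ε ≤ 1)
    (ha : 1 / 2 ≤ a) (hab : a ≤ b) (hb : b ≤ M) :
    0 ≤ ∫ t in a..b, bidIntegrand M ε t :=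
  integral_nonneg hab fun _ ht => bidIntegrand_nonneg hε hM hMε (ha.trans ht.1) (ht.2.trans hb)

lemma bidIntegrand_of_one_le (ht : 1 ≤ t) :
    bidIntegrand M ε t = ε * (exp t - 1) / (1 + ε * (M - t) * (exp t - 1)) := by
  rw [bidIntegrand, cdf_of_one_le ht, density, if_neg (not_lt.2 ht)]
  ring

lemma half_inv_sub_le_bidIntegrand (hM : 5 ≤ M) (ht : M / 2 ≤ t) (htM : t ≤ M - 1) :
    (M - t)⁻¹ / 2 ≤ bidIntegrand M (1 / M ^ 2) t := by
  rw [bidIntegrand_of_one_le (by linarith)]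
  refine half_inv_le_div_one_add_mul (by linarith) ?_
  rw [mul_assoc, one_div_mul_eq_div, one_le_div (by positivity)]
  exact sq_le_sub_mul_exp_sub_one hM ht htM

lemma half_log_le_integral_bidIntegrand (hM : 5 ≤ M) :
    log (M / 2) / 2 ≤ ∫ t in M / 2..M - 1, bidIntegrand M (1 / M ^ 2) t := by
  have hinv : IntervalIntegrable (fun t => (M - t)⁻¹) volume (M / 2) (M - 1) :=
    intervalIntegrable_inv (fun t ht => by rw [uIcc_of_le (by linarith)] at ht; linarith [ht.2])
      (by fun_prop)
  calc log (M / 2) / 2 = ∫ t in M / 2..M - 1, (M - t)⁻¹ / 2 := by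
        rw [intervalIntegral.integral_div, integral_inv_sub_left (by linarith) (by linarith)]
        ring_nf
    _ ≤ ∫ t in M / 2..M - 1, bidIntegrand M (1 / M ^ 2) t := by
        refine integral_mono_on (by linarith) (hinv.div_const 2)
          (intervalIntegrable_bidIntegrand (by positivity) (by linarith)
            (sub_one_mul_one_div_sq_le_one (by linarith)) (by linarith) (by linarith)
            (by linarith)) fun t ht => half_inv_sub_le_bidIntegrand hM ht.1 ht.2

end AllPay

open AllPay in
/-- From the proof of Theorem 6: for the value distribution with density
`2(1 − (M−1)ε)` on `[1/2, 1)` and `ε = 1/M²` on `[1, M]` (M > 5), the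
symmetric equilibrium bidding function `β` of the all-pay auction satisfies
`β(M − 1) > (1/3)·ln(M/2)`. -/
theorem stmt7 (M : ℝ) (hM : 5 < M)
    (ε : ℝ) (hε : ε = 1 / M ^ 2)
    (f : ℝ → ℝ)
    (hf : ∀ t : ℝ, f t = if t < 1 then 2 * (1 - (M - 1) * ε) else ε)
    (F : ℝ → ℝ) (hF : ∀ x : ℝ, F x = ∫ t in (1/2 : ℝ)..x, f t)
    (β : ℝ → ℝ)
    (hβ : ∀ x : ℝ, β x =
      ∫ t in (1/2 : ℝ)..x, f t * (Real.exp t - 1) / (F t + (1 - F t) * Real.exp t)) :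
    (1/3) * Real.log (M / 2) < β (M - 1) := by
  obtain rfl : f = density M ε := funext hf
  obtain rfl : F = cdf M ε := funext hF
  subst hε
  have hε : 0 ≤ 1 / M ^ 2 := by positivity
  have hM1 : 1 ≤ M := by linarith
  have hMε := sub_one_mul_one_div_sq_le_one hM1
  have hsplit : β (M - 1) = (∫ t in (1 / 2)..M / 2, bidIntegrand M (1 / M ^ 2) t) +
      ∫ t in M / 2..M - 1, bidIntegrand M (1 / M ^ 2) t :=
    (hβ _).trans (integral_add_adjacent_intervals
      (intervalIntegrable_bidIntegrand hε hM1 hMε le_rfl (by linarith) (by linarith))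
      (intervalIntegrable_bidIntegrand hε hM1 hMε (by linarith) (by linarith) (by linarith))).symm
  have hlow :=
    integral_bidIntegrand_nonneg (b := M / 2) hε hM1 hMε le_rfl (by linarith) (by linarith)
  have hhigh := half_log_le_integral_bidIntegrand hM.le
  have hlog : 0 < log (M / 2) := log_pos (by linarith)
  linarith
end

section
/- Suppose every player's risk-averse utility has the form h(v_i(x) − p_i) with h concave, h(z) = z for z ≥ 0 and h(z) = C·z for z < 0, with constant C ≥ 1. In a single-item all-pay auction, the deviation where the highest-value player bids v_h/2 and all others bid 0 satisfies Σ_i u_i(a*_i, a_{-i}) ≥ (1/2)·ÔPT − (C+1)·Σ_i p_i(a) for every action profile a, where ÔPT = v_h. Consequently (using OPT ≤ 2·ÔPT) the all-pay auction is ((1/4), C+1)-smooth w.r.t. these risk-averse utilities and its price of anarchy is at most 4(C+1). -/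
/-- Appendix theorem on the all-pay auction with limited risk aversion.
Utilities have the form `h(vᵢ − pᵢ)` with `h(z) = z` for `z ≥ 0`,
`h(z) = C·z` for `z < 0`, `C ≥ 1`.  In a single-item all-pay auction (every
player pays her bid; `win b` is an arbitrary argmax tie-breaking rule), the
deviation in which the highest-value player `hi` bids `v hi / 2` and all
others bid `0` witnesses
`Σᵢ uᵢ(a*ᵢ, a₋ᵢ) ≥ (1/2)·ÔPT − (C+1)·Σᵢ pᵢ(a)` for every profile `a`, where
`ÔPT = v hi`; hence (using `OPT ≤ 2·ÔPT`) the auction is `(1/4, C+1)`-smooth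
w.r.t. these risk-averse utilities and every (correlated) equilibrium has
welfare at least `OPT / (4(C+1))`, i.e. the price of anarchy is at most
`4(C+1)`. -/
theorem stmt16 {N : Type*} [Fintype N] [DecidableEq N] (C : ℝ) (hC : 1 ≤ C)
    (v : N → ℝ) (hv : ∀ i, 0 ≤ v i)
    (hi : N) (hhi : ∀ i, v i ≤ v hi)
    (win : (N → ℝ) → N) (hwin : ∀ (b : N → ℝ) (j : N), b j ≤ b (win b))
    (h : ℝ → ℝ) (hh : ∀ z : ℝ, h z = if 0 ≤ z then z else C * z)
    (u : N → (N → ℝ) → ℝ)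
    (hu : ∀ i b, u i b = if i = win b then h (v i - b i) else h (-(b i)))
    (dev : N → ℝ)
    (hdev : dev = Function.update (fun _ : N => (0 : ℝ)) hi (v hi / 2)) :
    (∀ a : N → ℝ, (∀ i, 0 ≤ a i) →
      (1/2) * v hi - (C + 1) * (∑ i, a i) ≤
        ∑ i, u i (Function.update a i (dev i))) ∧
    (∀ OPT : ℝ, 0 ≤ OPT → OPT ≤ 2 * v hi →
      (∀ a : N → ℝ, (∀ i, 0 ≤ a i) →
        (1/4) * OPT - (C + 1) * (∑ i, a i) ≤
          ∑ i, u i (Function.update a i (dev i))) ∧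
      (∀ (S : Finset (N → ℝ)) (w : (N → ℝ) → ℝ),
        (∀ b ∈ S, 0 ≤ w b) → (∑ b ∈ S, w b) = 1 →
        (∀ b ∈ S, ∀ i, 0 ≤ b i) →
        (∀ i, 0 ≤ ∑ b ∈ S, w b * u i b) →
        (∀ i, (∑ b ∈ S, w b * u i (Function.update b i (dev i))) ≤
          ∑ b ∈ S, w b * u i b) →
        (1 / (4 * (C + 1))) * OPT ≤
          ∑ b ∈ S, w b * ((∑ i, u i b) + ∑ i, b i))) := by
  have hC0 : (0:ℝ) ≤ C + 1 := by linarith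
  have key : ∀ a : N → ℝ, (∀ i, 0 ≤ a i) →
      (1/2) * v hi - (C + 1) * (∑ i, a i) ≤ ∑ i, u i (Function.update a i (dev i)) := by
    intro a ha
    have hsa : 0 ≤ ∑ i, a i := Finset.sum_nonneg fun i _ => ha i
    have hnonneg : ∀ i, i ≠ hi → 0 ≤ u i (Function.update a i (dev i)) := by
      intro i hne
      have hdevi : dev i = 0 := by rw [hdev, Function.update_of_ne hne]
      rw [hu, hdevi]
      by_cases hw' : i = win (Function.update a i 0)
      · rw [if_pos hw', Function.update_self, hh]
        have : (0:ℝ) ≤ v i - 0 := by linarith [hv i]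
        rw [if_pos this]; linarith [hv i]
      · rw [if_neg hw', Function.update_self, hh]
        norm_num
    have hsplit : ∑ i, u i (Function.update a i (dev i))
        = u hi (Function.update a hi (dev hi))
          + ∑ i ∈ Finset.univ.erase hi, u i (Function.update a i (dev i)) :=
      (Finset.add_sum_erase _ _ (Finset.mem_univ hi)).symm
    have hrest : 0 ≤ ∑ i ∈ Finset.univ.erase hi, u i (Function.update a i (dev i)) :=
      Finset.sum_nonneg fun i hi' => hnonneg i (Finset.ne_of_mem_erase hi')
    have hdevhi : dev hi = v hi / 2 := by rw [hdev, Function.update_self]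
    set b := Function.update a hi (dev hi) with hb
    by_cases hw' : hi = win b
    · have hub : u hi b = v hi / 2 := by
        rw [hu, if_pos hw', hb, hdevhi, Function.update_self, hh]
        have : (0:ℝ) ≤ v hi - v hi / 2 := by linarith [hv hi]
        rw [if_pos this]; ring
      rw [hsplit, hub]
      nlinarith [hv hi]
    · have hwin_ne : win b ≠ hi := fun h' => hw' h'.symm
      have hbi : b hi = v hi / 2 := by rw [hb, Function.update_self, hdevhi]
      have hbw : b (win b) = a (win b) := Function.update_of_ne hwin_ne _ _
      have h1 : v hi / 2 ≤ a (win b) := by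
        have := hwin b hi
        rw [hbi, hbw] at this
        exact this
      have h2 : a (win b) ≤ ∑ i, a i :=
        Finset.single_le_sum (fun i _ => ha i) (Finset.mem_univ _)
      have h3 : -(C * (v hi / 2)) ≤ u hi b := by
        rw [hu, if_neg hw', hb, hdevhi, Function.update_self, hh]
        split_ifs with h4
        · nlinarith [hv hi]
        · linarith
      rw [hsplit]
      nlinarith [hv hi]
  refine ⟨key, fun OPT hOPT hOPT2 => ?_⟩
  have key2 : ∀ a : N → ℝ, (∀ i, 0 ≤ a i) →
      (1/4) * OPT - (C + 1) * (∑ i, a i) ≤ ∑ i, u i (Function.update a i (dev i)) := by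
    intro a ha
    have := key a ha
    linarith
  refine ⟨key2, fun S w hw hw1 hbpos hnn heq => ?_⟩
  set T := ∑ b ∈ S, w b * (∑ i, u i b) with hT
  set P := ∑ b ∈ S, w b * (∑ i, b i) with hP
  have hT0 : 0 ≤ T := by
    have hTeq : T = ∑ i, ∑ b ∈ S, w b * u i b := by
      rw [hT]; simp_rw [Finset.mul_sum]; rw [Finset.sum_comm]
    rw [hTeq]
    exact Finset.sum_nonneg fun i _ => hnn i
  have hP0 : 0 ≤ P := by
    refine Finset.sum_nonneg fun b hb => mul_nonneg (hw b hb) ?_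
    exact Finset.sum_nonneg fun i _ => hbpos b hb i
  have h1 : ∑ b ∈ S, w b * ((1/4)*OPT - (C+1)*∑ i, b i)
      ≤ ∑ b ∈ S, w b * (∑ i, u i (Function.update b i (dev i))) :=
    Finset.sum_le_sum fun b hb =>
      mul_le_mul_of_nonneg_left (key2 b (hbpos b hb)) (hw b hb)
  have h2 : ∑ b ∈ S, w b * (∑ i, u i (Function.update b i (dev i))) ≤ T := by
    have hl : ∑ b ∈ S, w b * (∑ i, u i (Function.update b i (dev i)))
        = ∑ i, ∑ b ∈ S, w b * u i (Function.update b i (dev i)) := by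
      simp_rw [Finset.mul_sum]; rw [Finset.sum_comm]
    have hTeq : T = ∑ i, ∑ b ∈ S, w b * u i b := by
      rw [hT]; simp_rw [Finset.mul_sum]; rw [Finset.sum_comm]
    rw [hl, hTeq]
    exact Finset.sum_le_sum fun i _ => heq i
  have h3 : ∑ b ∈ S, w b * ((1/4)*OPT - (C+1)*∑ i, b i)
      = (1/4)*OPT * (∑ b ∈ S, w b) - (C+1) * P := by
    rw [hP, Finset.mul_sum, Finset.mul_sum, ← Finset.sum_sub_distrib]
    exact Finset.sum_congr rfl fun b _ => by ring
  rw [hw1] at h3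
  have step : (1/4)*OPT - (C+1)*P ≤ T := by
    rw [h3] at h1; linarith
  have hRHS : ∑ b ∈ S, w b * ((∑ i, u i b) + ∑ i, b i) = T + P := by
    rw [hT, hP, ← Finset.sum_add_distrib]
    exact Finset.sum_congr rfl fun b _ => by ring
  rw [hRHS, div_mul_eq_mul_div, div_le_iff₀ (by positivity : (0:ℝ) < 4*(C+1))]
  nlinarith [mul_nonneg (by linarith : (0:ℝ) ≤ C) hT0]
end
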